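/- arXiv:1801.06676 — 4 statements merged into one kernel-verified Lean document; each statement's English description precedes it below -/
import Mathlib

section
/- Let G be a locally compact Hausdorff topological group that is unimodular, with (two-sided invariant) Haar measure μ. Let c : G × G × G → ℂ be continuous, left-invariant (c(g g₀, g g₁, g g₂) = c(g₀, g₁, g₂) for all g, g₀, g₁, g₂), cyclic (c(g₀, g₁, g₂) = c(g₂, g₀, g₁)), and a homogeneous group 2-cocycle (c(g₁,g₂,g₃) − c(g₀,g₂,g₃) + c(g₀,g₁,g₃) − c(g₀,g₁,g₂) = 0 for all g₀,…,g₃). For continuous compactly supported f₀, f₁, f₂ : G → ℂ define τ_c(f₀, f₁, f₂) := ∫_G ∫_G c(e, g₁, g₁g₂) f₀((g₁g₂)⁻¹) f₁(g₁) f₂(g₂) dμ(g₁) dμ(g₂). Then τ_c is a cyclic 2-cocycle on the convolution algebra C_c(G): (i) τ_c(f₀, f₁, f₂) = τ_c(f₂, f₀, f₁) for all f₀, f₁, f₂ ∈ C_c(G); (ii) for all f₀, f₁, f₂, f₃ ∈ C_c(G), τ_c(f₀⋆f₁, f₂, f₃) − τ_c(f₀, f₁⋆f₂, f₃) + τ_c(f₀,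 f₁, f₂⋆f₃) − τ_c(f₃⋆f₀, f₁, f₂) = 0. -/
open MeasureTheory

/-- The convolution product on the algebra of continuous compactly supported functions of a
locally compact group: `(f ⋆ h)(x) = ∫ g, f g * h (g⁻¹ x) dμ(g)`. -/
noncomputable def groupConv {G : Type*} [Group G] [MeasurableSpace G]
    (μ : Measure G) (f h : G → ℂ) : G → ℂ :=
  fun x => ∫ g : G, f g * h (g⁻¹ * x) ∂μ

/-- The cyclic 2-cochain on the convolution algebra associated to a homogeneous group
2-cochain `c`:
`τ_c(f₀,f₁,f₂) = ∫∫ c(e, g₁, g₁g₂) f₀((g₁g₂)⁻¹) f₁(g₁) f₂(g₂) dμ(g₁) dμ(g₂)`. -/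
noncomputable def tauOf {G : Type*} [Group G] [MeasurableSpace G]
    (μ : Measure G) (c : G → G → G → ℂ) (f₀ f₁ f₂ : G → ℂ) : ℂ :=
  ∫ g₁ : G, ∫ g₂ : G,
    c 1 g₁ (g₁ * g₂) * f₀ ((g₁ * g₂)⁻¹) * f₁ g₁ * f₂ g₂ ∂μ ∂μ


/-!
Both identities are changes of variables in iterated Haar integrals of continuous compactly
supported functions, for which Fubini holds without σ-finiteness. On a unimodular group these
integrals are invariant under right translation and inversion, hence under the substitutions
`(a, b) ↦ (b, (ab)⁻¹)` and `(x, y, z) ↦ (y, z, (xyz)⁻¹)`: the cyclic symmetries of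
`g₀g₁g₂ = 1` and `g₀g₁g₂g₃ = 1`. The first, together with invariance and cyclicity of `c`,
is the cyclicity of `τ_c`. For the coboundary, each of the four terms becomes
`∫∫∫ k(x,y,z) f₀((xyz)⁻¹) f₁(x) f₂(y) f₃(z)`, where `k` is one face of `c` evaluated at
`(1, x, xy, xyz)` (for the term with `f₀ ⋆ f₁` after the second substitution), so their
alternating sum is the same integral of the group coboundary of `c`, which vanishes.
-/
open Measure Function

section CompactSupport

variable {X Y M : Type*} [TopologicalSpace X] [TopologicalSpace Y]

theorem HasCompactSupport.comp_of_leftInverse [R1Space X] [Zero M] {f : Y → M} {g : X → Y}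
    {h : Y → X} (hf : HasCompactSupport f) (hh : Continuous h) (hhg : LeftInverse h g) :
    HasCompactSupport (f ∘ g) :=
  .intro (hf.image hh) fun x hx =>
    show f (g x) = 0 from image_eq_zero_of_notMem_tsupport fun hgx => hx ⟨g x, hgx, hhg x⟩

theorem HasCompactSupport.mul_prod [MulZeroClass M] {f : X → M} {g : Y → M}
    (hf : HasCompactSupport f) (hg : HasCompactSupport g) :
    HasCompactSupport fun p : X × Y => f p.1 * g p.2 := by
  refine .intro' (hf.prod hg) ((isClosed_tsupport f).prod (isClosed_tsupport g)) fun p hp => ?_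
  rcases not_and_or.1 hp with h | h <;> simp [image_eq_zero_of_notMem_tsupport h]

end CompactSupport

section ParametricIntegral

variable {X Y Z E : Type*} [TopologicalSpace X] [TopologicalSpace Y] [TopologicalSpace Z]
  [NormedAddCommGroup E]

theorem continuous_integral_of_hasCompactSupport_uncurry [NormedSpace ℝ E] [MeasurableSpace Y]
    [OpensMeasurableSpace Y] {ν : Measure Y} [IsFiniteMeasureOnCompacts ν] {F : X → Y → E}
    (hF : Continuous F.uncurry) (hFs : HasCompactSupport F.uncurry) :
    Continuous fun x => ∫ y, F x y ∂ν :=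
  continuousOn_univ.1 <| continuousOn_integral_of_compact_support (hFs.image continuous_snd)
    hF.continuousOn fun x y _ hy =>
      image_eq_zero_of_notMem_tsupport (f := F.uncurry) fun h => hy ⟨(x, y), h, rfl⟩

theorem hasCompactSupport_integral_of_uncurry [R1Space X] [NormedSpace ℝ E] [MeasurableSpace Y]
    {ν : Measure Y} {F : X → Y → E} (hFs : HasCompactSupport F.uncurry) :
    HasCompactSupport fun x => ∫ y, F x y ∂ν := by
  refine .intro (hFs.image continuous_fst) fun x hx => ?_
  have hFx : ∀ y, F x y = 0 := fun y =>
    image_eq_zero_of_notMem_tsupport (f := F.uncurry) fun h => hx ⟨(x, y), h, rfl⟩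
  simp [hFx]

theorem integrable_apply_of_hasCompactSupport_uncurry [R1Space Y] [MeasurableSpace Y]
    [OpensMeasurableSpace Y] {ν : Measure Y} [IsFiniteMeasureOnCompacts ν] {F : X → Y → E}
    (hF : Continuous F.uncurry) (hFs : HasCompactSupport F.uncurry) (x : X) :
    Integrable (F x) ν :=
  (hF.comp (Continuous.prodMk_right x)).integrable_of_hasCompactSupport
    (hFs.comp_of_leftInverse continuous_snd fun _ => rfl)

variable [NormedSpace ℝ E] [MeasurableSpace X] [OpensMeasurableSpace X] [R1Space X]
  [MeasurableSpace Y] [OpensMeasurableSpace Y]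
  {μ : Measure X} {ν : Measure Y} [IsFiniteMeasureOnCompacts μ] [IsFiniteMeasureOnCompacts ν]

theorem integrable_integral_of_hasCompactSupport_uncurry {F : X → Y → E}
    (hF : Continuous F.uncurry) (hFs : HasCompactSupport F.uncurry) :
    Integrable (fun x => ∫ y, F x y ∂ν) μ :=
  (continuous_integral_of_hasCompactSupport_uncurry hF hFs).integrable_of_hasCompactSupport
    (hasCompactSupport_integral_of_uncurry hFs)

variable [R1Space Y] [MeasurableSpace Z] [OpensMeasurableSpace Z] [R1Space Z] {ρ : Measure Z}
  [IsFiniteMeasureOnCompacts ρ] {F H : X → Y → Z → E}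

theorem integral_integral_integral_add_of_hasCompactSupport
    (hF : Continuous (uncurry (uncurry F))) (hFs : HasCompactSupport (uncurry (uncurry F)))
    (hH : Continuous (uncurry (uncurry H))) (hHs : HasCompactSupport (uncurry (uncurry H))) :
    ∫ x, ∫ y, ∫ z, F x y z + H x y z ∂ρ ∂ν ∂μ
      = ∫ x, ∫ y, ∫ z, F x y z ∂ρ ∂ν ∂μ + ∫ x, ∫ y, ∫ z, H x y z ∂ρ ∂ν ∂μ := by
  have hF₂ := continuous_integral_of_hasCompactSupport_uncurry (ν := ρ) hF hFs
  have hFs₂ := hasCompactSupport_integral_of_uncurry (ν := ρ) hFs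
  have hH₂ := continuous_integral_of_hasCompactSupport_uncurry (ν := ρ) hH hHs
  have hHs₂ := hasCompactSupport_integral_of_uncurry (ν := ρ) hHs
  rw [← integral_add (integrable_integral_of_hasCompactSupport_uncurry
    (F := fun x y => ∫ z, F x y z ∂ρ) hF₂ hFs₂)
    (integrable_integral_of_hasCompactSupport_uncurry (F := fun x y => ∫ z, H x y z ∂ρ) hH₂ hHs₂)]
  refine integral_congr_ae <| .of_forall fun x => ?_
  dsimp only
  rw [← integral_add (integrable_apply_of_hasCompactSupport_uncurry
    (F := fun x y => ∫ z, F x y z ∂ρ) hF₂ hFs₂ x)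
    (integrable_apply_of_hasCompactSupport_uncurry (F := fun x y => ∫ z, H x y z ∂ρ) hH₂ hHs₂ x)]
  exact integral_congr_ae <| .of_forall fun y =>
    integral_add (integrable_apply_of_hasCompactSupport_uncurry hF hFs (x, y))
      (integrable_apply_of_hasCompactSupport_uncurry hH hHs (x, y))

theorem integral_integral_integral_rotate_of_hasCompactSupport
    (hF : Continuous (uncurry (uncurry F))) (hFs : HasCompactSupport (uncurry (uncurry F))) :
    ∫ x, ∫ y, ∫ z, F x y z ∂ρ ∂ν ∂μ = ∫ y, ∫ z, ∫ x, F x y z ∂μ ∂ρ ∂ν := by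
  rw [integral_integral_swap_of_hasCompactSupport (f := fun x y => ∫ z, F x y z ∂ρ)
    (continuous_integral_of_hasCompactSupport_uncurry hF hFs)
    (hasCompactSupport_integral_of_uncurry hFs)]
  exact integral_congr_ae <| .of_forall fun y => integral_integral_swap_of_hasCompactSupport
    (f := fun x z => F x y z) (hF.comp (f := fun p : X × Z => ((p.1, y), p.2)) (by fun_prop))
    (hFs.comp_of_leftInverse (g := fun p : X × Z => ((p.1, y), p.2))
      (h := fun p => (p.1.1, p.2)) (by fun_prop) fun _ => rfl)

end ParametricIntegral

section Unimodular

variable {G : Type*} [Group G] [TopologicalSpace G] [IsTopologicalGroup G] [LocallyCompactSpace G]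
  [MeasurableSpace G] [BorelSpace G] (μ : Measure G) [μ.IsHaarMeasure] [μ.IsMulRightInvariant]

theorem integral_comp_inv_of_hasCompactSupport {f : G → ℂ} (hf : Continuous f)
    (hfs : HasCompactSupport f) : ∫ x, f x⁻¹ ∂μ = ∫ x, f x ∂μ := by
  -- `μ.inv` is left invariant, hence equal to `r • μ` on `C_c(G)`; inverting twice gives `r² = 1`.
  set r := haarScalarFactor μ.inv μ
  have hr : ∀ g : G → ℝ, Continuous g → HasCompactSupport g →
      ∫ x, g x⁻¹ ∂μ = r * ∫ x, g x ∂μ := fun g hg hgs => by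
    calc ∫ x, g x⁻¹ ∂μ = ∫ x, g x ∂μ.inv := (integral_map_equiv (MeasurableEquiv.inv G) g).symm
      _ = r * ∫ x, g x ∂μ := by
        rw [integral_isMulLeftInvariant_eq_smul_of_hasCompactSupport μ.inv μ hg hgs,
          integral_smul_nnreal_measure]
        rfl
  have hr_one : (r : ℝ) = 1 := by
    obtain ⟨g, hgs, hg_nonneg, hg_one⟩ := exists_continuous_nonneg_pos (1 : G)
    have hpos : 0 < ∫ x, g x ∂μ :=
      g.continuous.integral_pos_of_hasCompactSupport_nonneg_nonzero hgs hg_nonneg hg_one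
    have hrr := hr (fun x => g x⁻¹) (g.continuous.comp continuous_inv)
      (hgs.comp_homeomorph (Homeomorph.inv G))
    simp only [inv_inv, hr g g.continuous hgs] at hrr
    have hr_sq : (r : ℝ) * r = 1 := mul_right_cancel₀ hpos.ne' (by linarith)
    nlinarith [r.coe_nonneg]
  have hre := hr _ (Complex.continuous_re.comp hf) (hfs.comp_left Complex.zero_re)
  have him := hr _ (Complex.continuous_im.comp hf) (hfs.comp_left Complex.zero_im)
  rw [hr_one, one_mul] at hre him
  have hfi := hf.integrable_of_hasCompactSupport hfs (μ := μ)
  have hfi' : Integrable (fun x => f x⁻¹) μ :=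
    (hf.comp continuous_inv).integrable_of_hasCompactSupport
      (hfs.comp_homeomorph (Homeomorph.inv G))
  have h_re := integral_re hfi
  have h_re' := integral_re hfi'
  have h_im := integral_im hfi
  have h_im' := integral_im hfi'
  simp only [RCLike.re_to_complex, RCLike.im_to_complex] at h_re h_re' h_im h_im'
  exact Complex.ext (h_re' ▸ h_re ▸ hre) (h_im' ▸ h_im ▸ him)

theorem integral_integral_cyclic {F : G → G → ℂ} (hF : Continuous F.uncurry)
    (hFs : HasCompactSupport F.uncurry) :
    ∫ a, ∫ b, F b (a * b)⁻¹ ∂μ ∂μ = ∫ a, ∫ b, F a b ∂μ ∂μ := by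
  have hcont : Continuous (uncurry fun a b => F b (a * b)⁻¹) :=
    hF.comp (f := fun p : G × G => (p.2, (p.1 * p.2)⁻¹)) (by fun_prop)
  have hsupp : HasCompactSupport (uncurry fun a b => F b (a * b)⁻¹) :=
    hFs.comp_of_leftInverse (g := fun p : G × G => (p.2, (p.1 * p.2)⁻¹))
      (h := fun q => ((q.1 * q.2)⁻¹, q.1)) (by fun_prop) fun p => by simp
  rw [integral_integral_swap_of_hasCompactSupport hcont hsupp]
  refine integral_congr_ae <| .of_forall fun b => ?_
  exact (integral_mul_right_eq_self (fun a => F b a⁻¹) b).trans <|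
    integral_comp_inv_of_hasCompactSupport μ (hF.comp (Continuous.prodMk_right b))
      (hFs.comp_of_leftInverse (g := fun a => (b, a)) continuous_snd fun _ => rfl)

theorem integral_integral_integral_cyclic {F : G → G → G → ℂ}
    (hF : Continuous (uncurry (uncurry F))) (hFs : HasCompactSupport (uncurry (uncurry F))) :
    ∫ x, ∫ y, ∫ z, F y z (x * (y * z))⁻¹ ∂μ ∂μ ∂μ = ∫ x, ∫ y, ∫ z, F x y z ∂μ ∂μ ∂μ := by
  have hcont : Continuous (uncurry (uncurry fun x y z => F y z (x * (y * z))⁻¹)) :=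
    hF.comp (f := fun p : (G × G) × G => ((p.1.2, p.2), (p.1.1 * (p.1.2 * p.2))⁻¹))
      (by fun_prop)
  have hsupp : HasCompactSupport (uncurry (uncurry fun x y z => F y z (x * (y * z))⁻¹)) :=
    (hFs.comp_of_leftInverse
      (g := fun p : (G × G) × G => ((p.1.2, p.2), (p.1.1 * (p.1.2 * p.2))⁻¹))
      (h := fun q => (((q.1.1 * (q.1.2 * q.2))⁻¹, q.1.1), q.1.2)) (by fun_prop)
      fun p => by simp [mul_assoc] :)
  rw [integral_integral_integral_rotate_of_hasCompactSupport hcont hsupp]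
  refine integral_congr_ae <| .of_forall fun y => integral_congr_ae <| .of_forall fun z => ?_
  exact (integral_mul_right_eq_self (fun x => F y z x⁻¹) (y * z)).trans <|
    integral_comp_inv_of_hasCompactSupport μ (hF.comp (Continuous.prodMk_right (y, z)))
      (hFs.comp_of_leftInverse (g := fun x => ((y, z), x)) continuous_snd fun _ => rfl)

end Unimodular

section TauOf₃

variable {G : Type*} [Group G] [MeasurableSpace G] (μ : Measure G)

/-- The analogue of `tauOf` for a group 3-cochain in inhomogeneous form: `k x y z` stands for the
value of a homogeneous 3-cochain at `(1, x, x * y, x * (y * z))`. -/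
noncomputable def tauOf₃ (k : G → G → G → ℂ) (f₀ f₁ f₂ f₃ : G → ℂ) : ℂ :=
  ∫ x, ∫ y, ∫ z, k x y z * f₀ (x * (y * z))⁻¹ * f₁ x * f₂ y * f₃ z ∂μ ∂μ ∂μ

theorem tauOf_groupConv_left (c : G → G → G → ℂ) (f₀ f₁ f₂ f₃ : G → ℂ) :
    tauOf μ c (groupConv μ f₃ f₀) f₁ f₂ = tauOf₃ μ (fun x y _ => c 1 x (x * y)) f₀ f₁ f₂ f₃ := by
  simp only [tauOf, tauOf₃, groupConv, ← integral_const_mul, ← integral_mul_const]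
  refine integral_congr_ae <| .of_forall fun x => integral_congr_ae <| .of_forall fun y =>
    integral_congr_ae <| .of_forall fun z => ?_
  dsimp only
  rw [show (x * (y * z))⁻¹ = z⁻¹ * (x * y)⁻¹ by group]
  ring

end TauOf₃

section TauOf₃Integrand

variable {G : Type*} [Group G] [TopologicalSpace G] {k : G → G → G → ℂ} {f₀ f₁ f₂ f₃ : G → ℂ}

theorem hasCompactSupport_tauOf₃_integrand (hf₁ : HasCompactSupport f₁)
    (hf₂ : HasCompactSupport f₂) (hf₃ : HasCompactSupport f₃) :
    HasCompactSupport
      (uncurry (uncurry fun x y z => k x y z * f₀ (x * (y * z))⁻¹ * f₁ x * f₂ y * f₃ z)) :=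
  ((hf₁.mul_prod hf₂).mul_prod hf₃).mono fun p hp => by
    simp only [mem_support, uncurry, mul_ne_zero_iff] at hp ⊢
    tauto

theorem continuous_tauOf₃_integrand [IsTopologicalGroup G] (hk : Continuous (uncurry (uncurry k)))
    (hf₀ : Continuous f₀) (hf₁ : Continuous f₁) (hf₂ : Continuous f₂) (hf₃ : Continuous f₃) :
    Continuous (uncurry (uncurry fun x y z => k x y z * f₀ (x * (y * z))⁻¹ * f₁ x * f₂ y * f₃ z)) :=
  (((hk.mul (hf₀.comp (by fun_prop))).mul (hf₁.comp (by fun_prop))).mul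
    (hf₂.comp (by fun_prop))).mul (hf₃.comp (by fun_prop))

end TauOf₃Integrand

section Tau

variable {G : Type*} [Group G] [TopologicalSpace G] [IsTopologicalGroup G] [MeasurableSpace G]
  [BorelSpace G] (μ : Measure G) [μ.IsHaarMeasure]
  {k k' : G → G → G → ℂ} {f₀ f₁ f₂ f₃ : G → ℂ}

theorem tauOf₃_add (hk : Continuous (uncurry (uncurry k)))
    (hk' : Continuous (uncurry (uncurry k'))) (hf₀ : Continuous f₀)
    (hf₁ : Continuous f₁) (hf₁s : HasCompactSupport f₁)
    (hf₂ : Continuous f₂) (hf₂s : HasCompactSupport f₂)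
    (hf₃ : Continuous f₃) (hf₃s : HasCompactSupport f₃) :
    tauOf₃ μ (k + k') f₀ f₁ f₂ f₃ = tauOf₃ μ k f₀ f₁ f₂ f₃ + tauOf₃ μ k' f₀ f₁ f₂ f₃ := by
  simp only [tauOf₃, Pi.add_apply, add_mul]
  exact integral_integral_integral_add_of_hasCompactSupport
    (continuous_tauOf₃_integrand hk hf₀ hf₁ hf₂ hf₃)
    (hasCompactSupport_tauOf₃_integrand hf₁s hf₂s hf₃s)
    (continuous_tauOf₃_integrand hk' hf₀ hf₁ hf₂ hf₃)
    (hasCompactSupport_tauOf₃_integrand hf₁s hf₂s hf₃s)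

theorem tauOf₃_sub (hk : Continuous (uncurry (uncurry k)))
    (hk' : Continuous (uncurry (uncurry k'))) (hf₀ : Continuous f₀)
    (hf₁ : Continuous f₁) (hf₁s : HasCompactSupport f₁)
    (hf₂ : Continuous f₂) (hf₂s : HasCompactSupport f₂)
    (hf₃ : Continuous f₃) (hf₃s : HasCompactSupport f₃) :
    tauOf₃ μ (k - k') f₀ f₁ f₂ f₃ = tauOf₃ μ k f₀ f₁ f₂ f₃ - tauOf₃ μ k' f₀ f₁ f₂ f₃ := by
  rw [sub_eq_add_neg k, tauOf₃_add μ (k' := -k') hk hk'.neg hf₀ hf₁ hf₁s hf₂ hf₂s hf₃ hf₃s,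
    sub_eq_add_neg]
  congr 1
  simp only [tauOf₃, Pi.neg_apply, neg_mul, integral_neg]

theorem integral_mul_groupConv {K : G → ℂ} (hK : Continuous K) (hf₁ : Continuous f₁)
    (hf₁s : HasCompactSupport f₁) (hf₂ : Continuous f₂) (hf₂s : HasCompactSupport f₂) :
    ∫ w, K w * groupConv μ f₁ f₂ w ∂μ = ∫ x, ∫ y, K (x * y) * f₁ x * f₂ y ∂μ ∂μ := by
  have hcont : Continuous (uncurry fun w x => K w * (f₁ x * f₂ (x⁻¹ * w))) := by fun_prop
  have hsupp : HasCompactSupport (uncurry fun w x => K w * (f₁ x * f₂ (x⁻¹ * w))) :=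
    ((hf₁s.mul_prod hf₂s).comp_of_leftInverse (g := fun p : G × G => (p.2, p.2⁻¹ * p.1))
      (h := fun q => (q.1 * q.2, q.1)) (by fun_prop) fun p => by simp :).mul_left
  simp only [groupConv, ← integral_const_mul]
  rw [integral_integral_swap_of_hasCompactSupport hcont hsupp]
  refine integral_congr_ae <| .of_forall fun x => ?_
  refine (integral_mul_left_eq_self _ x).symm.trans <| integral_congr_ae <| .of_forall fun y => ?_
  simp only [inv_mul_cancel_left]
  ring

theorem tauOf_groupConv_right (c : G → G → G → ℂ)
    (hc : Continuous fun p : G × G × G => c p.1 p.2.1 p.2.2) (hf₀ : Continuous f₀)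
    (hf₂ : Continuous f₂) (hf₂s : HasCompactSupport f₂)
    (hf₃ : Continuous f₃) (hf₃s : HasCompactSupport f₃) :
    tauOf μ c f₀ f₁ (groupConv μ f₂ f₃)
      = tauOf₃ μ (fun x y z => c 1 x (x * (y * z))) f₀ f₁ f₂ f₃ := by
  refine integral_congr_ae <| .of_forall fun x => ?_
  have hcx : Continuous fun w => c 1 x (x * w) :=
    hc.comp (f := fun w => (1, x, x * w)) (by fun_prop)
  exact integral_mul_groupConv μ (K := fun w => c 1 x (x * w) * f₀ (x * w)⁻¹ * f₁ x)
    (by fun_prop) hf₂ hf₂s hf₃ hf₃s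

theorem tauOf_groupConv_middle (c : G → G → G → ℂ)
    (hc : Continuous fun p : G × G × G => c p.1 p.2.1 p.2.2) (hf₀ : Continuous f₀)
    (hf₁ : Continuous f₁) (hf₁s : HasCompactSupport f₁) (hf₂ : Continuous f₂)
    (hf₂s : HasCompactSupport f₂) (hf₃ : Continuous f₃) (hf₃s : HasCompactSupport f₃) :
    tauOf μ c f₀ (groupConv μ f₁ f₂) f₃
      = tauOf₃ μ (fun x y z => c 1 (x * y) (x * (y * z))) f₀ f₁ f₂ f₃ := by
  set Ψ := fun a => ∫ w, c 1 a (a * w) * f₀ (a * w)⁻¹ * f₃ w ∂μ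
  have hΨ : Continuous Ψ := by
    refine continuousOn_univ.1 <| continuousOn_integral_of_compact_support hf₃s
      (Continuous.continuousOn ?_) fun a w _ hw => by simp [image_eq_zero_of_notMem_tsupport hw]
    exact ((hc.comp (f := fun p : G × G => (1, p.1, p.1 * p.2)) (by fun_prop)).mul
      (by fun_prop)).mul (by fun_prop)
  calc tauOf μ c f₀ (groupConv μ f₁ f₂) f₃ = ∫ a, Ψ a * groupConv μ f₁ f₂ a ∂μ := by
        refine integral_congr_ae <| .of_forall fun a => ?_
        simp only [Ψ, ← integral_mul_const]
        exact integral_congr_ae <| .of_forall fun w => by ring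
    _ = ∫ x, ∫ y, Ψ (x * y) * f₁ x * f₂ y ∂μ ∂μ := integral_mul_groupConv μ hΨ hf₁ hf₁s hf₂ hf₂s
    _ = _ := by
        refine integral_congr_ae <| .of_forall fun x => integral_congr_ae <| .of_forall fun y => ?_
        simp only [Ψ, ← integral_mul_const]
        exact integral_congr_ae <| .of_forall fun z => by simp only [mul_assoc]; ring

variable [LocallyCompactSpace G] [μ.IsMulRightInvariant]

theorem tauOf₃_rotate (hk : Continuous (uncurry (uncurry k))) (hf₀ : Continuous f₀)
    (hf₀s : HasCompactSupport f₀) (hf₁ : Continuous f₁) (hf₂ : Continuous f₂)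
    (hf₂s : HasCompactSupport f₂) (hf₃ : Continuous f₃) (hf₃s : HasCompactSupport f₃) :
    tauOf₃ μ k f₁ f₂ f₃ f₀ = tauOf₃ μ (fun x y z => k y z (x * (y * z))⁻¹) f₀ f₁ f₂ f₃ := by
  rw [tauOf₃, ← integral_integral_integral_cyclic μ
    (continuous_tauOf₃_integrand hk hf₁ hf₂ hf₃ hf₀)
    (hasCompactSupport_tauOf₃_integrand hf₂s hf₃s hf₀s)]
  refine integral_congr_ae <| .of_forall fun x => integral_congr_ae <| .of_forall fun y =>
    integral_congr_ae <| .of_forall fun z => ?_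
  dsimp only
  rw [show y * (z * (x * (y * z))⁻¹) = x⁻¹ by group, inv_inv]
  ring

theorem tauOf_groupConv_left' (c : G → G → G → ℂ)
    (hc : Continuous fun p : G × G × G => c p.1 p.2.1 p.2.2) (hf₀ : Continuous f₀)
    (hf₀s : HasCompactSupport f₀) (hf₁ : Continuous f₁) (hf₂ : Continuous f₂)
    (hf₂s : HasCompactSupport f₂) (hf₃ : Continuous f₃) (hf₃s : HasCompactSupport f₃) :
    tauOf μ c (groupConv μ f₀ f₁) f₂ f₃ = tauOf₃ μ (fun _ y z => c 1 y (y * z)) f₀ f₁ f₂ f₃ :=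
  (tauOf_groupConv_left μ c f₁ f₂ f₃ f₀).trans <| tauOf₃_rotate μ
    (hc.comp (f := fun p : (G × G) × G => (1, p.1.1, p.1.1 * p.1.2)) (by fun_prop))
    hf₀ hf₀s hf₁ hf₂ hf₂s hf₃ hf₃s

theorem tauOf_cyclic (c : G → G → G → ℂ) (hc : Continuous fun p : G × G × G => c p.1 p.2.1 p.2.2)
    (hc_inv : ∀ g g₀ g₁ g₂ : G, c (g * g₀) (g * g₁) (g * g₂) = c g₀ g₁ g₂)
    (hc_cyc : ∀ g₀ g₁ g₂ : G, c g₀ g₁ g₂ = c g₂ g₀ g₁) (hf₀ : Continuous f₀)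
    (hf₁ : Continuous f₁) (hf₁s : HasCompactSupport f₁)
    (hf₂ : Continuous f₂) (hf₂s : HasCompactSupport f₂) :
    tauOf μ c f₀ f₁ f₂ = tauOf μ c f₂ f₀ f₁ := by
  have hc' : Continuous fun p : G × G => c 1 p.1 (p.1 * p.2) :=
    hc.comp (f := fun p : G × G => (1, p.1, p.1 * p.2)) (by fun_prop)
  have hsupp : HasCompactSupport
      (uncurry fun a b => c 1 a (a * b) * f₀ (a * b)⁻¹ * f₁ a * f₂ b) :=
    (hf₁s.mul_prod hf₂s).mono fun p hp => by
      simp only [mem_support, uncurry, mul_ne_zero_iff] at hp ⊢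
      tauto
  rw [tauOf, ← integral_integral_cyclic μ (by fun_prop) hsupp]
  refine integral_congr_ae <| .of_forall fun a => integral_congr_ae <| .of_forall fun b => ?_
  have hab : b * (a * b)⁻¹ = a⁻¹ := by group
  have hc_ab : c 1 b a⁻¹ = c 1 a (a * b) := by
    rw [← hc_inv a, mul_one, mul_inv_cancel, hc_cyc]
  dsimp only
  rw [hab, inv_inv, hc_ab]
  ring

theorem tauOf_hochschild_eq_zero (c : G → G → G → ℂ)
    (hc : Continuous fun p : G × G × G => c p.1 p.2.1 p.2.2)
    (hc_inv : ∀ g g₀ g₁ g₂ : G, c (g * g₀) (g * g₁) (g * g₂) = c g₀ g₁ g₂)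
    (hc_cocycle : ∀ g₀ g₁ g₂ g₃ : G, c g₁ g₂ g₃ - c g₀ g₂ g₃ + c g₀ g₁ g₃ - c g₀ g₁ g₂ = 0)
    (hf₀ : Continuous f₀) (hf₀s : HasCompactSupport f₀)
    (hf₁ : Continuous f₁) (hf₁s : HasCompactSupport f₁)
    (hf₂ : Continuous f₂) (hf₂s : HasCompactSupport f₂)
    (hf₃ : Continuous f₃) (hf₃s : HasCompactSupport f₃) :
    tauOf μ c (groupConv μ f₀ f₁) f₂ f₃ - tauOf μ c f₀ (groupConv μ f₁ f₂) f₃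
      + tauOf μ c f₀ f₁ (groupConv μ f₂ f₃) - tauOf μ c (groupConv μ f₃ f₀) f₁ f₂ = 0 := by
  have hA : Continuous (uncurry (uncurry fun (_ y z : G) => c 1 y (y * z))) :=
    hc.comp (f := fun p : (G × G) × G => (1, p.1.2, p.1.2 * p.2)) (by fun_prop)
  have hB : Continuous (uncurry (uncurry fun (x y z : G) => c 1 (x * y) (x * (y * z)))) :=
    hc.comp (f := fun p : (G × G) × G => (1, p.1.1 * p.1.2, p.1.1 * (p.1.2 * p.2)))
      (by fun_prop)
  have hC : Continuous (uncurry (uncurry fun (x y z : G) => c 1 x (x * (y * z)))) :=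
    hc.comp (f := fun p : (G × G) × G => (1, p.1.1, p.1.1 * (p.1.2 * p.2))) (by fun_prop)
  have hD : Continuous (uncurry (uncurry fun (x y _ : G) => c 1 x (x * y))) :=
    hc.comp (f := fun p : (G × G) × G => (1, p.1.1, p.1.1 * p.1.2)) (by fun_prop)
  have hδc : ∀ x y z : G,
      c 1 y (y * z) - c 1 (x * y) (x * (y * z)) + c 1 x (x * (y * z)) - c 1 x (x * y) = 0 := by
    intro x y z
    rw [← hc_inv x 1 y (y * z), mul_one]
    exact hc_cocycle 1 x (x * y) (x * (y * z))
  rw [tauOf_groupConv_left' μ c hc hf₀ hf₀s hf₁ hf₂ hf₂s hf₃ hf₃s,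
    tauOf_groupConv_middle μ c hc hf₀ hf₁ hf₁s hf₂ hf₂s hf₃ hf₃s,
    tauOf_groupConv_right μ c hc hf₀ hf₂ hf₂s hf₃ hf₃s,
    tauOf_groupConv_left μ c f₀ f₁ f₂ f₃,
    ← tauOf₃_sub μ hA hB hf₀ hf₁ hf₁s hf₂ hf₂s hf₃ hf₃s,
    ← tauOf₃_add μ _ hC hf₀ hf₁ hf₁s hf₂ hf₂s hf₃ hf₃s,
    ← tauOf₃_sub μ _ hD hf₀ hf₁ hf₁s hf₂ hf₂s hf₃ hf₃s]
  · simp only [tauOf₃, Pi.sub_apply, Pi.add_apply, hδc, zero_mul, integral_zero]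
  · exact (hA.sub hB).add hC
  · exact hA.sub hB

end Tau

theorem tauOf_is_cyclic_two_cocycle_general
    {G : Type*} [Group G] [TopologicalSpace G] [IsTopologicalGroup G]
    [LocallyCompactSpace G] [MeasurableSpace G] [BorelSpace G]
    (μ : Measure G) [μ.IsHaarMeasure] [μ.IsMulRightInvariant]
    (c : G → G → G → ℂ)
    (c_cont : Continuous fun p : G × G × G => c p.1 p.2.1 p.2.2)
    (c_inv : ∀ g g₀ g₁ g₂ : G, c (g * g₀) (g * g₁) (g * g₂) = c g₀ g₁ g₂)
    (c_cyc : ∀ g₀ g₁ g₂ : G, c g₀ g₁ g₂ = c g₂ g₀ g₁)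
    (c_cocycle : ∀ g₀ g₁ g₂ g₃ : G,
      c g₁ g₂ g₃ - c g₀ g₂ g₃ + c g₀ g₁ g₃ - c g₀ g₁ g₂ = 0) :
    (∀ f₀ f₁ f₂ : G → ℂ,
      Continuous f₀ → HasCompactSupport f₀ →
      Continuous f₁ → HasCompactSupport f₁ →
      Continuous f₂ → HasCompactSupport f₂ →
        tauOf μ c f₀ f₁ f₂ = tauOf μ c f₂ f₀ f₁) ∧
    (∀ f₀ f₁ f₂ f₃ : G → ℂ,
      Continuous f₀ → HasCompactSupport f₀ →
      Continuous f₁ → HasCompactSupport f₁ →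
      Continuous f₂ → HasCompactSupport f₂ →
      Continuous f₃ → HasCompactSupport f₃ →
        tauOf μ c (groupConv μ f₀ f₁) f₂ f₃ - tauOf μ c f₀ (groupConv μ f₁ f₂) f₃
          + tauOf μ c f₀ f₁ (groupConv μ f₂ f₃) - tauOf μ c (groupConv μ f₃ f₀) f₁ f₂ = 0) := by
  exact ⟨fun f₀ f₁ f₂ hf₀ _ hf₁ hf₁s hf₂ hf₂s =>
      tauOf_cyclic μ c c_cont c_inv c_cyc hf₀ hf₁ hf₁s hf₂ hf₂s,
    fun f₀ f₁ f₂ f₃ hf₀ hf₀s hf₁ hf₁s hf₂ hf₂s hf₃ hf₃s =>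
      tauOf_hochschild_eq_zero μ c c_cont c_inv c_cocycle hf₀ hf₀s hf₁ hf₁s hf₂ hf₂s hf₃ hf₃s⟩

/-- Let `G` be a unimodular locally compact Hausdorff group with Haar
measure `μ`.  Let `c : G³ → ℂ` be continuous, left-invariant, cyclic and a homogeneous group
2-cocycle.  Then `τ_c` is a cyclic 2-cocycle on the convolution algebra `C_c(G)`:
it is cyclic, and its Hochschild coboundary vanishes. -/
theorem tauOf_is_cyclic_two_cocycle
    {G : Type*} [Group G] [TopologicalSpace G] [IsTopologicalGroup G] [T2Space G]
    [LocallyCompactSpace G] [MeasurableSpace G] [BorelSpace G]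
    (μ : Measure G) [μ.IsHaarMeasure] [μ.IsMulRightInvariant]
    (c : G → G → G → ℂ)
    (c_cont : Continuous fun p : G × G × G => c p.1 p.2.1 p.2.2)
    (c_inv : ∀ g g₀ g₁ g₂ : G, c (g * g₀) (g * g₁) (g * g₂) = c g₀ g₁ g₂)
    (c_cyc : ∀ g₀ g₁ g₂ : G, c g₀ g₁ g₂ = c g₂ g₀ g₁)
    (c_cocycle : ∀ g₀ g₁ g₂ g₃ : G,
      c g₁ g₂ g₃ - c g₀ g₂ g₃ + c g₀ g₁ g₃ - c g₀ g₁ g₂ = 0) :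
    (∀ f₀ f₁ f₂ : G → ℂ,
      Continuous f₀ → HasCompactSupport f₀ →
      Continuous f₁ → HasCompactSupport f₁ →
      Continuous f₂ → HasCompactSupport f₂ →
        tauOf μ c f₀ f₁ f₂ = tauOf μ c f₂ f₀ f₁) ∧
    (∀ f₀ f₁ f₂ f₃ : G → ℂ,
      Continuous f₀ → HasCompactSupport f₀ →
      Continuous f₁ → HasCompactSupport f₁ →
      Continuous f₂ → HasCompactSupport f₂ →
      Continuous f₃ → HasCompactSupport f₃ →
        tauOf μ c (groupConv μ f₀ f₁) f₂ f₃ - tauOf μ c f₀ (groupConv μ f₁ f₂) f₃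
          + tauOf μ c f₀ f₁ (groupConv μ f₂ f₃) - tauOf μ c (groupConv μ f₃ f₀) f₁ f₂ = 0) :=
  tauOf_is_cyclic_two_cocycle_general μ c c_cont c_inv c_cyc c_cocycle
end

section
/- For all Schwartz functions f₀, f₁, f₂ : ℝ² → ℂ, writing f̂ for the Fourier transform f̂(ξ) = ∫_{ℝ²} f(x) e^{−2πi⟨x,ξ⟩} dx, the following identity holds: ∫_{ℝ²} ∫_{ℝ²} f₀(−u−v) f₁(u) f₂(v) (u₁ v₂ − u₂ v₁) du dv = −(1/(4π²)) ∫_{ℝ²} f̂₀(ξ) (∂₁f̂₁(ξ) ∂₂f̂₂(ξ) − ∂₂f̂₁(ξ) ∂₁f̂₂(ξ)) dξ. In other words, after Fourier transform the cyclic 2-cocycle on the convolution algebra of ℝ² defined by the Euclidean area cocycle takes, up to a nonzero constant, the usual form ∫ f̂₀ df̂₁ ∧ df̂₂. -/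
open MeasureTheory SchwartzMap Real
open scoped FourierTransform

/-! Multiplication by the coordinate `x_j` becomes `∂_j` after Fourier transform,
`∂_j f̂ = -2πi (x_j f)^`, so splitting `u₁v₂ − u₂v₁` turns the right-hand side into `4π²` times
a difference of two integrals `∫ f̂₀ â b̂`, with `a, b` coordinate multiples of `f₁, f₂`.
Each of them equals `∫∫ f₀(−u−v) a(u) b(v)`: the inner integral is the convolution
`(b ⋆ f₀)(−u)`, whose transform is `b̂ f̂₀`, and `∫ â ĝ = ∫ a(x) g(−x)` because `𝓕𝓕g = g ∘ neg`. -/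

namespace SchwartzMap

section

variable {E F : Type*} [NormedAddCommGroup E] [InnerProductSpace ℝ E]
  [NormedAddCommGroup F] [NormedSpace ℂ F]

theorem smulLeftCLM_inner_apply (f : 𝓢(E, F)) (m x : E) :
    smulLeftCLM F (inner ℝ · m) f x = inner ℝ x m • f x :=
  smulLeftCLM_apply_apply ((innerSL ℝ).flip m).hasTemperateGrowth f x

variable [FiniteDimensional ℝ E] [MeasurableSpace E] [BorelSpace E]

theorem fderiv_fourier_apply (f : 𝓢(E, F)) (ξ m : E) :
    fderiv ℝ (𝓕 ⇑f) ξ m =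
      -(2 * π * Complex.I) • 𝓕 ⇑(smulLeftCLM F (inner ℝ · m) f) ξ := by
  rw [← fourier_coe, ← lineDerivOp_apply_eq_fderiv, lineDerivOp_fourier_eq,
    FourierTransform.fourier_smul]
  rfl

theorem fourier_fourier_apply [CompleteSpace F] (f : 𝓢(E, F)) (x : E) :
    𝓕 (𝓕 ⇑f) x = f (-x) := by
  rw [← neg_neg x, ← Real.fourierInv_eq_fourier_neg, neg_neg, ← fourier_coe, ← fourierInv_coe,
    FourierTransform.fourierInv_fourier_eq]

end

variable {E : Type*} [NormedAddCommGroup E] [InnerProductSpace ℝ E] [FiniteDimensional ℝ E]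
  [MeasurableSpace E] [BorelSpace E]

theorem integral_fourier_mul_fourier (f g : 𝓢(E, ℂ)) :
    ∫ ξ, 𝓕 ⇑f ξ * 𝓕 ⇑g ξ = ∫ x, f x * g (-x) := by
  simp_rw [← fourier_fourier_apply g]
  exact integral_fourier_mul_eq f (𝓕 g)

theorem integral_integral_comp_neg_sub_mul_mul (f₀ a b : 𝓢(E, ℂ)) :
    ∫ u, ∫ v, f₀ (-u - v) * a u * b v = ∫ ξ, 𝓕 ⇑f₀ ξ * 𝓕 ⇑a ξ * 𝓕 ⇑b ξ := by
  set c := convolution (ContinuousLinearMap.mul ℂ ℂ) b f₀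
  have hinner (u : E) : ∫ v, f₀ (-u - v) * a u * b v = a u * c (-u) := by
    rw [convolution_apply, convolution_def, ← integral_const_mul]
    congr 1 with v
    simp only [ContinuousLinearMap.mul_apply']
    ring
  have hc (ξ : E) : 𝓕 ⇑c ξ = 𝓕 ⇑b ξ * 𝓕 ⇑f₀ ξ := by
    rw [← fourier_coe, fourier_convolution, pairing_apply_apply]; rfl
  simp_rw [hinner, ← integral_fourier_mul_fourier, hc]
  congr 1 with ξ
  ring

theorem integrable_fourier_mul_fourier_mul_fourier (f g h : 𝓢(E, ℂ)) :
    Integrable fun ξ => 𝓕 ⇑f ξ * 𝓕 ⇑g ξ * 𝓕 ⇑h ξ :=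
  SchwartzMap.integrable (μ := volume) <| pairing (ContinuousLinearMap.mul ℂ ℂ)
    (pairing (ContinuousLinearMap.mul ℂ ℂ) (𝓕 f) (𝓕 g)) (𝓕 h)

theorem integrable_comp_neg_sub_mul_mul (f₀ a b : 𝓢(E, ℂ)) :
    Integrable (fun p : E × E => f₀ (-p.1 - p.2) * a p.1 * b p.2) (volume.prod volume) := by
  have hab := (a.integrable (μ := volume)).mul_prod (b.integrable (μ := volume))
  refine (hab.bdd_mul (f := fun p => f₀ (-p.1 - p.2)) (c := SchwartzMap.seminorm ℝ 0 0 f₀)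
    ?_ ?_).congr ?_
  · exact (f₀.continuous.comp (by fun_prop)).aestronglyMeasurable
  · exact .of_forall fun p => norm_le_seminorm ℝ f₀ _
  · exact .of_forall fun p => (mul_assoc _ _ _).symm

end SchwartzMap

/-- For Schwartz functions `f₀, f₁, f₂ : ℝ² → ℂ`, with the Fourier transform
`f̂(ξ) = ∫ f(x) e^{−2πi⟨x,ξ⟩} dx`, one has
`∫∫ f₀(−u−v) f₁(u) f₂(v) (u₁v₂ − u₂v₁) du dv
  = −(1/(4π²)) ∫ f̂₀ (∂₁f̂₁ ∂₂f̂₂ − ∂₂f̂₁ ∂₁f̂₂)`: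
after Fourier transform the cyclic 2-cocycle of the Euclidean area cocycle takes the usual
form `∫ f̂₀ df̂₁ ∧ df̂₂` up to a nonzero constant. -/
theorem area_cocycle_fourier_transform
    (f₀ f₁ f₂ : 𝓢(EuclideanSpace ℝ (Fin 2), ℂ)) :
    (∫ u : EuclideanSpace ℝ (Fin 2), ∫ v : EuclideanSpace ℝ (Fin 2),
        f₀ (-u - v) * f₁ u * f₂ v * ((u 0 * v 1 - u 1 * v 0 : ℝ) : ℂ)) =
      -(1 / ((4 * Real.pi ^ 2 : ℝ) : ℂ)) *
        ∫ ξ : EuclideanSpace ℝ (Fin 2),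
          𝓕 (⇑f₀) ξ *
            (fderiv ℝ (𝓕 (⇑f₁)) ξ (EuclideanSpace.single 0 1) *
                fderiv ℝ (𝓕 (⇑f₂)) ξ (EuclideanSpace.single 1 1) -
              fderiv ℝ (𝓕 (⇑f₁)) ξ (EuclideanSpace.single 1 1) *
                fderiv ℝ (𝓕 (⇑f₂)) ξ (EuclideanSpace.single 0 1)) := by
  let X (j : Fin 2) := smulLeftCLM ℂ (inner ℝ · (EuclideanSpace.single j (1 : ℝ)))
  have hX (j : Fin 2) (f : 𝓢(EuclideanSpace ℝ (Fin 2), ℂ))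
      (u : EuclideanSpace ℝ (Fin 2)) : X j f u = u j * f u := by
    rw [smulLeftCLM_inner_apply, EuclideanSpace.inner_single_right]
    simp [Complex.real_smul]
  have hspace (u v : EuclideanSpace ℝ (Fin 2)) :
      f₀ (-u - v) * f₁ u * f₂ v * ((u 0 * v 1 - u 1 * v 0 : ℝ) : ℂ) =
        f₀ (-u - v) * X 0 f₁ u * X 1 f₂ v - f₀ (-u - v) * X 1 f₁ u * X 0 f₂ v := by
    simp only [hX]; push_cast; ring
  have hfreq (ξ : EuclideanSpace ℝ (Fin 2)) :
      𝓕 (⇑f₀) ξ *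
          (fderiv ℝ (𝓕 (⇑f₁)) ξ (EuclideanSpace.single 0 1) *
              fderiv ℝ (𝓕 (⇑f₂)) ξ (EuclideanSpace.single 1 1) -
            fderiv ℝ (𝓕 (⇑f₁)) ξ (EuclideanSpace.single 1 1) *
              fderiv ℝ (𝓕 (⇑f₂)) ξ (EuclideanSpace.single 0 1)) =
        -(4 * (π : ℂ) ^ 2) * (𝓕 ⇑f₀ ξ * 𝓕 ⇑(X 0 f₁) ξ * 𝓕 ⇑(X 1 f₂) ξ -
          𝓕 ⇑f₀ ξ * 𝓕 ⇑(X 1 f₁) ξ * 𝓕 ⇑(X 0 f₂) ξ) := by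
    simp only [fderiv_fourier_apply, smul_eq_mul]
    ring_nf
    simp only [Complex.I_sq]
    ring
  simp_rw [hspace, hfreq]
  rw [integral_integral_sub (integrable_comp_neg_sub_mul_mul f₀ (X 0 f₁) (X 1 f₂))
      (integrable_comp_neg_sub_mul_mul f₀ (X 1 f₁) (X 0 f₂))]
  dsimp only
  rw [integral_const_mul,
    integral_sub (integrable_fourier_mul_fourier_mul_fourier f₀ (X 0 f₁) (X 1 f₂))
      (integrable_fourier_mul_fourier_mul_fourier f₀ (X 1 f₁) (X 0 f₂)),
    integral_integral_comp_neg_sub_mul_mul, integral_integral_comp_neg_sub_mul_mul]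
  push_cast
  field_simp
end

section
/- Let n ≥ 1, let k ∈ ℕ be arbitrary, and let p ∈ ℕ satisfy 2p > n. Then there exists a constant C > 0 such that for all measurable f, g : ℝⁿ → ℂ with ν_{k+p}(f) < ∞ and ν_k(g) < ∞, the convolution f ⋆ g is defined almost everywhere and satisfies ν_k(f ⋆ g) ≤ C ν_{k+p}(f) ν_k(g). In particular, the rapid decay space H^∞_L(ℝⁿ) = {f ∈ L²(ℝⁿ) : ν_k(f) < ∞ for all k ∈ ℕ} is closed under convolution, i.e. it is a convolution algebra. -/
open MeasureTheory
open scoped ENNReal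

/-!
Submultiplicativity of the weights dominates `w_k |f ⋆ g|` pointwise by the convolution
`(w_k |f|) ⋆ (w_k |g|)`. Young's inequality `‖F ⋆ H‖₂ ≤ ‖F‖₁ ‖H‖₂` (Cauchy–Schwarz against the
measure `F y dy`, then Tonelli and translation invariance) bounds its `L²` norm, and
Cauchy–Schwarz gives `‖w_k f‖₁ ≤ ‖w_{-p}‖₂ ‖w_{k+p} f‖₂`, where `w_{-p} ∈ L²` because `2p > n`.
Since the dominating convolution is in `L²`, it is finite almost everywhere, which gives the
almost everywhere integrability.
-/

/-- The rapid decay seminorm `ν_k(f) = ‖(1+‖·‖)^k f‖_{L²}` on functions on `ℝⁿ`. -/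
noncomputable def rdSeminorm (n k : ℕ) (f : EuclideanSpace ℝ (Fin n) → ℂ) : ℝ≥0∞ :=
  eLpNorm (fun x => ((1 + ‖x‖) ^ k : ℝ) • f x) 2 volume

theorem enorm_mul_le {A : Type*} [NonUnitalSeminormedRing A] (a b : A) :
    ‖a * b‖ₑ ≤ ‖a‖ₑ * ‖b‖ₑ := by
  simpa only [enorm_eq_nnnorm, ← ENNReal.coe_mul] using ENNReal.coe_le_coe.2 (nnnorm_mul_le a b)

theorem ae_lt_top_of_eLpNorm_lt_top {α : Type*} [MeasurableSpace α] {μ : Measure α}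
    {f : α → ℝ≥0∞} {p : ℝ≥0∞} (hf : AEMeasurable f μ) (hp0 : p ≠ 0) (hp : p ≠ ∞)
    (hfp : eLpNorm f p μ < ∞) : ∀ᵐ x ∂μ, f x < ∞ := by
  rw [eLpNorm_lt_top_iff_lintegral_rpow_enorm_lt_top hp0 hp] at hfp
  filter_upwards [ae_lt_top' (hf.pow_const _) hfp.ne] with x hx
  exact (ENNReal.rpow_lt_top_iff_of_pos (ENNReal.toReal_pos hp0 hp)).1 hx

section Young

variable {G : Type*} [AddGroup G] [MeasurableSpace G] [MeasurableAdd₂ G] [MeasurableNeg G]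
  {μ : Measure G} {F H : G → ℝ≥0∞}

theorem lconvolution_rpow_two_le (hF : Measurable F) (hH : Measurable H) (x : G) :
    (F ⋆ₗ[μ] H) x ^ (2 : ℝ) ≤ (∫⁻ y, F y ∂μ) * ∫⁻ y, F y * H (-y + x) ^ (2 : ℝ) ∂μ := by
  have hsplit : ∀ y, F y ^ (1 / 2 : ℝ) * (F y * H (-y + x) ^ (2 : ℝ)) ^ (1 / 2 : ℝ)
      = F y * H (-y + x) := by
    intro y
    rw [ENNReal.mul_rpow_of_nonneg _ _ (by norm_num), ← mul_assoc,
      ← ENNReal.rpow_add_of_nonneg _ _ (by norm_num) (by norm_num), ← ENNReal.rpow_mul]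
    norm_num
  have hCS := ENNReal.lintegral_mul_norm_pow_le (μ := μ) hF.aemeasurable
    (hF.mul (by fun_prop : Measurable fun y => H (-y + x) ^ (2 : ℝ))).aemeasurable
    (p := 1 / 2) (q := 1 / 2) (by norm_num) (by norm_num) (by norm_num)
  simp only [Pi.mul_apply, hsplit] at hCS
  calc (F ⋆ₗ[μ] H) x ^ (2 : ℝ)
      ≤ ((∫⁻ y, F y ∂μ) ^ (1 / 2 : ℝ) *
          (∫⁻ y, F y * H (-y + x) ^ (2 : ℝ) ∂μ) ^ (1 / 2 : ℝ)) ^ (2 : ℝ) :=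
        ENNReal.rpow_le_rpow hCS (by norm_num)
    _ = _ := by
        rw [ENNReal.mul_rpow_of_nonneg _ _ (by norm_num), ← ENNReal.rpow_mul, ← ENNReal.rpow_mul]
        norm_num

variable [SFinite μ] [μ.IsAddLeftInvariant]

theorem lintegral_lconvolution_rpow_two_le (hF : Measurable F) (hH : Measurable H) :
    ∫⁻ x, (F ⋆ₗ[μ] H) x ^ (2 : ℝ) ∂μ ≤ (∫⁻ y, F y ∂μ) ^ (2 : ℝ) * ∫⁻ x, H x ^ (2 : ℝ) ∂μ := by
  calc ∫⁻ x, (F ⋆ₗ[μ] H) x ^ (2 : ℝ) ∂μ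
      ≤ ∫⁻ x, (∫⁻ y, F y ∂μ) * ∫⁻ y, F y * H (-y + x) ^ (2 : ℝ) ∂μ ∂μ :=
        lintegral_mono fun x => lconvolution_rpow_two_le hF hH x
    _ = (∫⁻ y, F y ∂μ) * ∫⁻ y, F y * ∫⁻ x, H (-y + x) ^ (2 : ℝ) ∂μ ∂μ := by
        rw [lintegral_const_mul _ (by fun_prop), lintegral_lintegral_swap (by fun_prop)]
        congr 1
        exact lintegral_congr fun y => lintegral_const_mul _ (by fun_prop)
    _ = (∫⁻ y, F y ∂μ) ^ (2 : ℝ) * ∫⁻ x, H x ^ (2 : ℝ) ∂μ := by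
        simp_rw [lintegral_add_left_eq_self (fun z => H z ^ (2 : ℝ)), lintegral_mul_const _ hF]
        rw [← mul_assoc, ENNReal.rpow_two, sq]

theorem eLpNorm_lconvolution_le (hF : Measurable F) (hH : Measurable H) :
    eLpNorm (F ⋆ₗ[μ] H) 2 μ ≤ (∫⁻ y, F y ∂μ) * eLpNorm H 2 μ := by
  simp only [eLpNorm_eq_lintegral_rpow_enorm_toReal two_ne_zero ENNReal.ofNat_ne_top,
    enorm_eq_self, ENNReal.toReal_ofNat]
  calc (∫⁻ x, (F ⋆ₗ[μ] H) x ^ (2 : ℝ) ∂μ) ^ (1 / 2 : ℝ)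
      ≤ ((∫⁻ y, F y ∂μ) ^ (2 : ℝ) * ∫⁻ x, H x ^ (2 : ℝ) ∂μ) ^ (1 / 2 : ℝ) :=
        ENNReal.rpow_le_rpow (lintegral_lconvolution_rpow_two_le hF hH) (by norm_num)
    _ = _ := by
        rw [ENNReal.mul_rpow_of_nonneg _ _ (by norm_num), ← ENNReal.rpow_mul]
        norm_num

end Young

section Weight

variable {E F : Type*} [SeminormedAddCommGroup E] [NormedAddCommGroup F]

noncomputable def weightedEnorm (k : ℕ) (f : E → F) (x : E) : ℝ≥0∞ :=
  ENNReal.ofReal ((1 + ‖x‖) ^ k) * ‖f x‖ₑ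

theorem enorm_le_weightedEnorm (k : ℕ) (f : E → F) (x : E) : ‖f x‖ₑ ≤ weightedEnorm k f x :=
  le_mul_of_one_le_left' <| ENNReal.one_le_ofReal.2 <| one_le_pow₀ <| by simp

theorem one_add_norm_pow_le_mul (k : ℕ) (x y : E) :
    (1 + ‖x‖) ^ k ≤ (1 + ‖y‖) ^ k * (1 + ‖x - y‖) ^ k := by
  rw [← mul_pow]
  gcongr
  nlinarith [norm_le_norm_add_norm_sub' x y, norm_nonneg y, norm_nonneg (x - y)]

theorem weightedEnorm_eq_mul (k p : ℕ) (f : E → F) (x : E) :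
    weightedEnorm k f x = ENNReal.ofReal ((1 + ‖x‖) ^ (-(p : ℝ))) * weightedEnorm (k + p) f x := by
  have hx : 0 < 1 + ‖x‖ := by positivity
  rw [weightedEnorm, weightedEnorm, ← mul_assoc, ← ENNReal.ofReal_mul (by positivity),
    ← Real.rpow_natCast, ← Real.rpow_natCast, ← Real.rpow_add hx]
  push_cast
  ring_nf

variable [MeasurableSpace E] {μ : Measure E}

theorem lintegral_enorm_mul_sub_le_lconvolution {A : Type*} [NormedRing A] (k : ℕ)
    (f g : E → A) (x : E) :
    ∫⁻ y, ‖f y * g (x - y)‖ₑ ∂μ ≤ (weightedEnorm k f ⋆ₗ[μ] weightedEnorm k g) x := by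
  simp only [lconvolution_def, neg_add_eq_sub]
  exact lintegral_mono fun y => (enorm_mul_le _ _).trans
    (mul_le_mul' (enorm_le_weightedEnorm k f y) (enorm_le_weightedEnorm k g (x - y)))

theorem weightedEnorm_convolution_le {A : Type*} [NormedRing A] [NormedSpace ℝ A] (k : ℕ)
    (f g : E → A) (x : E) :
    weightedEnorm k (fun x => ∫ y, f y * g (x - y) ∂μ) x ≤
      (weightedEnorm k f ⋆ₗ[μ] weightedEnorm k g) x := by
  calc weightedEnorm k (fun x => ∫ y, f y * g (x - y) ∂μ) x
      ≤ ENNReal.ofReal ((1 + ‖x‖) ^ k) * ∫⁻ y, ‖f y‖ₑ * ‖g (x - y)‖ₑ ∂μ := by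
        unfold weightedEnorm
        gcongr
        exact (enorm_integral_le_lintegral_enorm _).trans
          (lintegral_mono fun y => enorm_mul_le _ _)
    _ = ∫⁻ y, ENNReal.ofReal ((1 + ‖x‖) ^ k) * (‖f y‖ₑ * ‖g (x - y)‖ₑ) ∂μ :=
        (lintegral_const_mul' _ _ ENNReal.ofReal_ne_top).symm
    _ ≤ ∫⁻ y, weightedEnorm k f y * weightedEnorm k g (x - y) ∂μ := by
        refine lintegral_mono fun y => ?_
        calc ENNReal.ofReal ((1 + ‖x‖) ^ k) * (‖f y‖ₑ * ‖g (x - y)‖ₑ)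
            ≤ ENNReal.ofReal ((1 + ‖y‖) ^ k * (1 + ‖x - y‖) ^ k) * (‖f y‖ₑ * ‖g (x - y)‖ₑ) := by
              gcongr
              exact one_add_norm_pow_le_mul k x y
          _ = weightedEnorm k f y * weightedEnorm k g (x - y) := by
              rw [ENNReal.ofReal_mul (by positivity), weightedEnorm, weightedEnorm]
              ring
    _ = _ := by simp only [lconvolution_def, neg_add_eq_sub]

variable [OpensMeasurableSpace E]

theorem lintegral_weightedEnorm_le (k p : ℕ) {f : E → F}
    (hf : AEMeasurable (weightedEnorm (k + p) f) μ) :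
    ∫⁻ x, weightedEnorm k f x ∂μ ≤
      (∫⁻ x, ENNReal.ofReal ((1 + ‖x‖) ^ (-(2 * p : ℝ))) ∂μ) ^ (1 / 2 : ℝ) *
        eLpNorm (weightedEnorm (k + p) f) 2 μ := by
  have hsq : ∀ x : E, ENNReal.ofReal ((1 + ‖x‖) ^ (-(p : ℝ))) ^ (2 : ℝ)
      = ENNReal.ofReal ((1 + ‖x‖) ^ (-(2 * p : ℝ))) := by
    intro x
    rw [ENNReal.ofReal_rpow_of_nonneg (by positivity) (by norm_num),
      ← Real.rpow_mul (by positivity)]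
    ring_nf
  calc ∫⁻ x, weightedEnorm k f x ∂μ
      = ∫⁻ x, ENNReal.ofReal ((1 + ‖x‖) ^ (-(p : ℝ))) * weightedEnorm (k + p) f x ∂μ :=
        lintegral_congr fun x => weightedEnorm_eq_mul k p f x
    _ ≤ _ := ENNReal.lintegral_mul_le_Lp_mul_Lq μ Real.HolderConjugate.two_two (by fun_prop) hf
    _ = _ := by
        simp only [hsq, eLpNorm_eq_lintegral_rpow_enorm_toReal two_ne_zero ENNReal.ofNat_ne_top,
          enorm_eq_self, ENNReal.toReal_ofNat]

theorem Measurable.weightedEnorm [MeasurableSpace F] [BorelSpace F] {f : E → F}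
    (hf : Measurable f) (k : ℕ) : Measurable (weightedEnorm k f) := by
  unfold _root_.weightedEnorm
  fun_prop

end Weight

theorem rdSeminorm_eq_eLpNorm_weightedEnorm (n k : ℕ) (f : EuclideanSpace ℝ (Fin n) → ℂ) :
    rdSeminorm n k f = eLpNorm (weightedEnorm k f) 2 volume := by
  refine eLpNorm_congr_enorm_ae (.of_forall fun x => ?_)
  rw [enorm_smul, Real.enorm_eq_ofReal (by positivity), enorm_eq_self, weightedEnorm]

theorem rapid_decay_convolution_algebra_general (n k p : ℕ) (hp : n < 2 * p) :
    ∃ C > (0 : ℝ), ∀ f g : EuclideanSpace ℝ (Fin n) → ℂ,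
      Measurable f → Measurable g →
      rdSeminorm n (k + p) f < ∞ → rdSeminorm n k g < ∞ →
        (∀ᵐ x : EuclideanSpace ℝ (Fin n) ∂volume,
            Integrable (fun y => f y * g (x - y)) volume) ∧
        rdSeminorm n k (fun x => ∫ y, f y * g (x - y)) ≤
          ENNReal.ofReal C * rdSeminorm n (k + p) f * rdSeminorm n k g := by
  set B := (∫⁻ x : EuclideanSpace ℝ (Fin n),
    ENNReal.ofReal ((1 + ‖x‖) ^ (-(2 * p : ℝ)))) ^ (1 / 2 : ℝ)
  have hB : B ≠ ∞ := by
    refine ENNReal.rpow_ne_top_of_nonneg (by norm_num) (finite_integral_one_add_norm ?_).ne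
    rw [finrank_euclideanSpace_fin]
    exact_mod_cast hp
  refine ⟨B.toReal + 1, by positivity, fun f g hf hg hνf hνg => ?_⟩
  have hconv : eLpNorm (weightedEnorm k f ⋆ₗ weightedEnorm k g) 2 volume ≤
      B * rdSeminorm n (k + p) f * rdSeminorm n k g := by
    rw [rdSeminorm_eq_eLpNorm_weightedEnorm, rdSeminorm_eq_eLpNorm_weightedEnorm]
    refine (eLpNorm_lconvolution_le (hf.weightedEnorm k) (hg.weightedEnorm k)).trans ?_
    gcongr
    exact lintegral_weightedEnorm_le k p (hf.weightedEnorm _).aemeasurable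
  refine ⟨?_, ?_⟩
  · have hfin := ae_lt_top_of_eLpNorm_lt_top
      (measurable_lconvolution _ (hf.weightedEnorm k) (hg.weightedEnorm k)).aemeasurable
      two_ne_zero ENNReal.ofNat_ne_top (hconv.trans_lt (by finiteness))
    filter_upwards [hfin] with x hx
    exact ⟨(hf.mul (hg.comp (measurable_const.sub measurable_id))).aestronglyMeasurable,
      (lintegral_enorm_mul_sub_le_lconvolution k f g x).trans_lt hx⟩
  · calc rdSeminorm n k (fun x => ∫ y, f y * g (x - y))
        ≤ eLpNorm (weightedEnorm k f ⋆ₗ weightedEnorm k g) 2 volume := by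
          rw [rdSeminorm_eq_eLpNorm_weightedEnorm]
          exact eLpNorm_mono_enorm fun x => weightedEnorm_convolution_le k f g x
      _ ≤ B * rdSeminorm n (k + p) f * rdSeminorm n k g := hconv
      _ ≤ ENNReal.ofReal (B.toReal + 1) * rdSeminorm n (k + p) f * rdSeminorm n k g := by
          gcongr
          exact (ENNReal.le_ofReal_iff_toReal_le hB (by positivity)).2 (by linarith)

/-- Let `n ≥ 1`, `k ∈ ℕ`, and `p ∈ ℕ` with `2p > n`.  Then there is
`C > 0` such that for all measurable `f, g : ℝⁿ → ℂ` with `ν_{k+p}(f) < ∞` and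
`ν_k(g) < ∞`, the convolution `f ⋆ g` is defined a.e. and
`ν_k(f ⋆ g) ≤ C ν_{k+p}(f) ν_k(g)`: the rapid decay space `H^∞_L(ℝⁿ)` is a convolution
algebra. -/
theorem rapid_decay_convolution_algebra (n k p : ℕ) (hn : 1 ≤ n) (hp : n < 2 * p) :
    ∃ C > (0 : ℝ), ∀ f g : EuclideanSpace ℝ (Fin n) → ℂ,
      Measurable f → Measurable g →
      rdSeminorm n (k + p) f < ∞ → rdSeminorm n k g < ∞ →
        (∀ᵐ x : EuclideanSpace ℝ (Fin n) ∂volume,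
            Integrable (fun y => f y * g (x - y)) volume) ∧
        rdSeminorm n k (fun x => ∫ y, f y * g (x - y)) ≤
          ENNReal.ofReal C * rdSeminorm n (k + p) f * rdSeminorm n k g :=
  rapid_decay_convolution_algebra_general n k p hp
end

section
/- Let A be a unital (not necessarily commutative) ring and let d, q ∈ A. Set s₊ := 1 − q·d and s₋ := 1 − d·q. Then the 2×2 matrix over A given by P := [[s₊², s₊·(1+s₊)·q], [s₋·d, 1 − s₋²]] is an idempotent: P·P = P. -/
/-!
Writing `s₊ = 1 - q d` and `s₋ = 1 - d q`, the intertwining relation `d s₊ = s₋ d` shows that `P`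
is the outer product of the column `u = (s₊, d)` with the row `v = (s₊, (1 + s₊) q)`.
Since `v u = s₊² + (1 + s₊)(1 - s₊) = 1`, we get `P² = u (v u) v = u v = P`.
-/

theorem mul_one_sub_mul_eq_one_sub_mul_mul {R : Type*} [Ring R] (a b : R) :
    a * (1 - b * a) = (1 - a * b) * a := by
  rw [mul_sub, sub_mul, mul_one, one_mul, mul_assoc]

namespace Matrix

theorem isIdempotentElem_vecMulVec {m α : Type*} [Fintype m] [Semiring α] {u v : m → α}
    (h : v ⬝ᵥ u = 1) : IsIdempotentElem (vecMulVec u v) := by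
  rw [IsIdempotentElem, vecMulVec_mul_vecMulVec, h, one_smul]

theorem vecMulVec_fin_two {α : Type*} [Mul α] (a b c e : α) :
    vecMulVec ![a, b] ![c, e] = !![a * c, a * e; b * c, b * e] :=
  eta_fin_two _

end Matrix

/-- Connes–Skandalis projector.  Let `A` be a unital ring, `d, q ∈ A`,
`s₊ = 1 − q d`, `s₋ = 1 − d q`.  Then the 2×2 matrix
`P = [[s₊², s₊(1+s₊)q], [s₋ d, 1 − s₋²]]` over `A` is an idempotent. -/
theorem connes_skandalis_projector_idempotent
    {A : Type*} [Ring A] (d q sp sm : A)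
    (hsp : sp = 1 - q * d) (hsm : sm = 1 - d * q) :
    (!![sp ^ 2, sp * (1 + sp) * q; sm * d, 1 - sm ^ 2] : Matrix (Fin 2) (Fin 2) A) *
        !![sp ^ 2, sp * (1 + sp) * q; sm * d, 1 - sm ^ 2] =
      !![sp ^ 2, sp * (1 + sp) * q; sm * d, 1 - sm ^ 2] := by
  have hqd : q * d = 1 - sp := by rw [hsp, sub_sub_cancel]
  have hdq : d * q = 1 - sm := by rw [hsm, sub_sub_cancel]
  have intertwine : d * sp = sm * d := by
    rw [hsp, hsm, mul_one_sub_mul_eq_one_sub_mul_mul]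
  have hdot : ![sp, (1 + sp) * q] ⬝ᵥ ![sp, d] = 1 := by
    rw [Matrix.vec2_dotProduct]
    simp only [Matrix.cons_val_zero, Matrix.cons_val_one, mul_assoc, hqd]
    noncomm_ring
  have hcorner : d * ((1 + sp) * q) = 1 - sm ^ 2 :=
    calc d * ((1 + sp) * q) = (1 + sm) * (d * q) := by
          rw [← mul_assoc, mul_one_add, intertwine, ← one_add_mul, mul_assoc]
      _ = 1 - sm ^ 2 := by rw [hdq]; noncomm_ring
  have hfactor : !![sp ^ 2, sp * (1 + sp) * q; sm * d, 1 - sm ^ 2] =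
      Matrix.vecMulVec ![sp, d] ![sp, (1 + sp) * q] := by
    rw [Matrix.vecMulVec_fin_two, intertwine, hcorner, pow_two, mul_assoc sp]
  rw [hfactor]
  exact Matrix.isIdempotentElem_vecMulVec hdot
end
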